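/- arXiv:1804.09600 — 3 statements merged into one kernel-verified Lean document; each statement's English description precedes it below -/
import Mathlib

section
/- For the symmetrization map π_n : ℂ^n → ℂ^n whose j-th coordinate is the j-th elementary symmetric polynomial, and for any domain D ⊆ ℂ, the image S_n(D) := π_n(D^n) is open and connected in ℂ^n. -/
/-- The symmetrization map `π_n : ℂ^n → ℂ^n`, whose `j`-th coordinate is the
`(j+1)`-st elementary symmetric polynomial of the entries. -/
noncomputable def symPoly (n : ℕ) (lam : Fin n → ℂ) : Fin n → ℂ :=
  fun j => ∑ t ∈ Finset.powersetCard ((j : ℕ) + 1) Finset.univ, ∏ i ∈ t, lam i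

/-- The `n`-fold symmetric product `S_n(D) = π_n(D^n)` of a planar set `D`. -/
noncomputable def symProd (n : ℕ) (D : Set ℂ) : Set (Fin n → ℂ) :=
  symPoly n '' {lam | ∀ i, lam i ∈ D}

/-! The image `S_n(D)` is connected as a continuous image of the connected set `D^n`.
For openness, `π_n` is surjective (every monic polynomial over `ℂ` splits) and proper (Cauchy's
bound controls the roots of `∏ (X - λ_i)` by its coefficients, which are `± σ_j(λ)`), hence a
closed quotient map. Moreover `D^n` is saturated: `π_n λ = π_n μ` makes `∏ (X - λ_i)` and
`∏ (X - μ_i)` equal, so `λ` and `μ` have the same multiset of entries. Hence `D^n` is the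
preimage of `S_n(D)`, and `S_n(D)` is open. -/

open Polynomial

namespace Multiset

theorem exists_fin_map_univ_eq {α : Type*} (s : Multiset α) {n : ℕ} (hn : card s = n) :
    ∃ f : Fin n → α, Finset.univ.val.map f = s := by
  subst hn
  refine ⟨fun i => s.toList.get (i.cast (length_toList s).symm), ?_⟩
  rw [Fin.univ_val_map]
  conv_rhs => rw [← coe_toList s]
  congr 1
  exact List.ext_get (by simp) fun i _ _ => by simp

variable {R : Type*}

theorem prod_X_sub_C_eq_of_esymm_eq [CommRing R] {s t : Multiset R} (hcard : card s = card t)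
    (h : ∀ j < card s, s.esymm (j + 1) = t.esymm (j + 1)) :
    (s.map fun a => X - C a).prod = (t.map fun a => X - C a).prod := by
  rw [prod_X_sub_X_eq_sum_esymm, prod_X_sub_X_eq_sum_esymm, ← hcard]
  refine Finset.sum_congr rfl fun j hj => ?_
  cases j with
  | zero => simp [esymm]
  | succ j => rw [h j (by simpa using hj)]

theorem eq_of_esymm_eq [CommRing R] [IsDomain R] {s t : Multiset R} (hcard : card s = card t)
    (h : ∀ j < card s, s.esymm (j + 1) = t.esymm (j + 1)) : s = t := by
  rw [← roots_multiset_prod_X_sub_C s, ← roots_multiset_prod_X_sub_C t,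
    prod_X_sub_C_eq_of_esymm_eq hcard h]

theorem exists_card_eq_esymm_eq [Field R] [IsAlgClosed R] {n : ℕ} (e : Fin n → R) :
    ∃ s : Multiset R, card s = n ∧ ∀ j : Fin n, s.esymm (j + 1) = e j := by
  -- the lower coefficients of `X ^ n + ∑ k < n, (-1) ^ (n - k) * e (n - k - 1) * X ^ k`
  let coeffs : Fin n → R := fun k => (-1) ^ (n - k) * e (Fin.rev k)
  obtain ⟨⟨p, hp, hdeg⟩, hcoeff⟩ :=
    ((monicEquivDegreeLT n).trans (degreeLTEquiv R n).toEquiv).surjective coeffs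
  have hcard : card p.roots = p.natDegree := splits_iff_card_roots.mp (IsAlgClosed.splits p)
  refine ⟨p.roots, hcard.trans hdeg, fun j => ?_⟩
  have hj : n - (n - (j + 1)) = j + 1 := by omega
  have hpcoeff : p.coeff (n - (j + 1)) = (-1) ^ (j + 1 : ℕ) * e j := by
    have hcoeff_j := congrFun hcoeff j.rev
    change p.eraseLead.coeff j.rev = (-1) ^ (n - (j.rev : ℕ)) * e j.rev.rev at hcoeff_j
    rwa [Fin.val_rev, Fin.rev_rev, eraseLead_coeff_of_ne _ (by omega), hj] at hcoeff_j
  have hvieta := coeff_eq_esymm_roots_of_card hcard (k := n - (j + 1)) (by omega)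
  rw [hp.leadingCoeff, one_mul, hdeg, hj, hpcoeff] at hvieta
  exact (mul_left_cancel₀ (pow_ne_zero _ (neg_ne_zero.mpr one_ne_zero)) hvieta).symm

theorem nnnorm_lt_of_nnnorm_esymm_le [NormedField R] {s : Multiset R} {B : NNReal}
    (h : ∀ j < card s, ‖s.esymm (j + 1)‖₊ ≤ B) {a : R} (ha : a ∈ s) : ‖a‖₊ < B + 1 := by
  set p := (s.map fun a => X - C a).prod
  have hp : p.Monic := monic_multiset_prod_of_monic _ _ fun a _ => monic_X_sub_C a
  have hroot : p.IsRoot a := by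
    rwa [← mem_roots hp.ne_zero, roots_multiset_prod_X_sub_C]
  refine (hroot.norm_lt_cauchyBound hp.ne_zero).trans_le ?_
  rw [cauchyBound, hp.leadingCoeff, nnnorm_one, div_one, natDegree_multiset_prod_X_sub_C_eq_card]
  gcongr
  refine Finset.sup_le fun k hk => ?_
  rw [Finset.mem_range] at hk
  rw [prod_X_sub_C_coeff s hk.le, nnnorm_mul, nnnorm_pow, nnnorm_neg, nnnorm_one, one_pow,
    one_mul]
  have hj := h (card s - k - 1) (by omega)
  rwa [show card s - k - 1 + 1 = card s - k by omega] at hj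

end Multiset

open Multiset

theorem symPoly_eq_esymm (n : ℕ) (lam : Fin n → ℂ) (j : Fin n) :
    symPoly n lam j = (Finset.univ.val.map lam).esymm (j + 1) := by
  rw [Finset.esymm_map_val]
  rfl

theorem map_univ_eq_of_symPoly_eq {n : ℕ} {lam mu : Fin n → ℂ}
    (h : symPoly n lam = symPoly n mu) :
    Finset.univ.val.map lam = Finset.univ.val.map mu :=
  eq_of_esymm_eq (by simp) fun j hj => by
    simpa only [symPoly_eq_esymm] using congrFun h ⟨j, by simpa using hj⟩

theorem symPoly_surjective (n : ℕ) : Function.Surjective (symPoly n) := by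
  intro c
  obtain ⟨s, hcard, hs⟩ := exists_card_eq_esymm_eq c
  obtain ⟨lam, rfl⟩ := exists_fin_map_univ_eq s hcard
  exact ⟨lam, funext fun j => (symPoly_eq_esymm n lam j).trans (hs j)⟩

theorem continuous_symPoly (n : ℕ) : Continuous (symPoly n) := by
  unfold symPoly
  fun_prop

theorem norm_lt_norm_symPoly_add_one {n : ℕ} (lam : Fin n → ℂ) :
    ‖lam‖ < ‖symPoly n lam‖ + 1 := by
  suffices ‖lam‖₊ < ‖symPoly n lam‖₊ + 1 by exact_mod_cast this
  refine (pi_nnnorm_lt_iff (by positivity)).mpr fun i => nnnorm_lt_of_nnnorm_esymm_le ?_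
    (mem_map_of_mem lam (Finset.mem_univ_val i))
  intro j hj
  rw [← symPoly_eq_esymm n lam ⟨j, by simpa using hj⟩]
  exact nnnorm_le_pi_nnnorm _ _

theorem isProperMap_symPoly (n : ℕ) : IsProperMap (symPoly n) := by
  refine isProperMap_iff_isCompact_preimage.mpr ⟨continuous_symPoly n, fun K hK => ?_⟩
  obtain ⟨C, hC⟩ := hK.isBounded.exists_norm_le
  refine (isCompact_closedBall 0 (C + 1)).of_isClosed_subset
    (hK.isClosed.preimage (continuous_symPoly n)) fun lam hlam => ?_
  rw [mem_closedBall_zero_iff]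
  exact (norm_lt_norm_symPoly_add_one lam).le.trans (by gcongr; exact hC _ hlam)

theorem symPoly_preimage_symProd (n : ℕ) (D : Set ℂ) :
    symPoly n ⁻¹' symProd n D = {lam | ∀ i, lam i ∈ D} := by
  refine Set.Subset.antisymm ?_ fun lam hlam => ⟨lam, hlam, rfl⟩
  rintro lam ⟨mu, hmu, heq⟩ i
  have hi : lam i ∈ Finset.univ.val.map mu :=
    map_univ_eq_of_symPoly_eq heq ▸ mem_map_of_mem lam (Finset.mem_univ_val i)
  obtain ⟨k, -, hk⟩ := mem_map.mp hi
  exact hk ▸ hmu k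

/-- For a domain `D ⊆ ℂ`, the symmetric product `S_n(D) = π_n(D^n)` is an open
and connected subset of `ℂ^n`. -/
theorem symProd_isOpen_isConnected (n : ℕ) (D : Set ℂ)
    (hDopen : IsOpen D) (hDconn : IsConnected D) :
    IsOpen (symProd n D) ∧ IsConnected (symProd n D) := by
  have hquot : Topology.IsQuotientMap (symPoly n) :=
    (isProperMap_symPoly n).isClosedMap.isQuotientMap (continuous_symPoly n) (symPoly_surjective n)
  have hpi : {lam : Fin n → ℂ | ∀ i, lam i ∈ D} = Set.univ.pi fun _ => D := by
    ext lam
    simp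
  constructor
  · rw [← hquot.isOpen_preimage, symPoly_preimage_symProd, hpi]
    exact isOpen_set_pi Set.finite_univ fun _ _ => hDopen
  · refine IsConnected.image ?_ _ (continuous_symPoly n).continuousOn
    rw [hpi]
    exact isConnected_univ_pi.mpr fun _ => hDconn
end

section
/- Let D ⊆ ℂ be a domain, n ≥ 2, and let w = π_n(μ_1,…,μ_n) with μ_1 ∈ ℂ \ D. Then the affine hyperplane H(w,μ_1) := {(μ_1 + z_1, μ_1 z_1 + z_2, …, μ_1 z_{n-2} + z_{n-1}, μ_1 z_{n-1}) : (z_1,…,z_{n-1}) ∈ ℂ^{n-1}} contains w and is disjoint from S_n(D). -/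
/-- The affine hyperplane `H(μ) = {(μ + z₁, μ z₁ + z₂, …, μ z_{n-2} + z_{n-1}, μ z_{n-1})}`
associated to `μ ∈ ℂ`, encoded via an auxiliary tuple `z : Fin (n+1) → ℂ`
with `z 0 = 1` and `z n = 0`. -/
def hplane (n : ℕ) (μ : ℂ) : Set (Fin n → ℂ) :=
  {v | ∃ z : Fin (n + 1) → ℂ, z 0 = 1 ∧ z (Fin.last n) = 0 ∧
    ∀ j : Fin n, v j = μ * z j.castSucc + z j.succ}

/-!
A point `v` lies on `H(x)` exactly when `x` is a root of the monic polynomial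
`Xⁿ - v₁ Xⁿ⁻¹ + v₂ Xⁿ⁻² - ⋯ ± vₙ`: the hyperplane is the image of
`z ↦ (X - x) · (Xⁿ⁻¹ - z₁ Xⁿ⁻² + ⋯ ± zₙ₋₁)` in signed coefficients, and evaluating at `x`
telescopes. For `v = π_n(λ)` this polynomial is `∏ (X - λᵢ)` by Vieta, so `π_n(λ) ∈ H(x)` iff
`x` is one of the `λᵢ`. Hence `π_n(μ) ∈ H(μ₁)`, while `H(μ₁)` misses `π_n(Dⁿ)` when `μ₁ ∉ D`.
-/

open Finset

theorem Multiset.esymm_cons_succ {R : Type*} [CommSemiring R] (a : R) (s : Multiset R) (k : ℕ) :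
    (a ::ₘ s).esymm (k + 1) = a * s.esymm k + s.esymm (k + 1) := by
  simp only [Multiset.esymm, Multiset.powersetCard_cons, Multiset.map_add, Multiset.sum_add,
    Multiset.map_map, Function.comp_def, Multiset.prod_cons, Multiset.sum_map_mul_left]
  ring

theorem Fin.sum_univ_castSucc_sub_succ {M : Type*} [AddCommGroup M] {n : ℕ} (f : Fin (n + 1) → M) :
    ∑ j : Fin n, (f j.castSucc - f j.succ) = f 0 - f (Fin.last n) := by
  have h := (Fin.sum_univ_castSucc f).symm.trans (Fin.sum_univ_succ f)
  rw [Finset.sum_sub_distrib]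
  linear_combination (norm := abel_nf) h

theorem symPoly_apply {n : ℕ} (lam : Fin n → ℂ) (j : Fin n) :
    symPoly n lam j = (univ.val.map lam).esymm (j + 1) :=
  (Finset.esymm_map_val lam univ _).symm

theorem pow_eq_sum_of_mem_hplane {n : ℕ} {x : ℂ} {v : Fin n → ℂ} (hv : v ∈ hplane n x) :
    x ^ n = ∑ j : Fin n, (-1) ^ (j : ℕ) * v j * x ^ (n - 1 - j) := by
  obtain ⟨z, hz0, hzn, hzv⟩ := hv
  have key := Fin.sum_univ_castSucc_sub_succ fun k : Fin (n + 1) =>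
    (-1) ^ (k : ℕ) * z k * x ^ (n - k)
  simp only [hz0, hzn, Fin.val_zero, Fin.val_last, pow_zero, one_mul, mul_zero, zero_mul,
    sub_zero, Nat.sub_zero] at key
  rw [← key]
  refine sum_congr rfl fun j _ => ?_
  rw [hzv j, Fin.val_castSucc, Fin.val_succ, show n - j = n - 1 - j + 1 by omega,
    show n - (j + 1) = n - 1 - j by omega]
  ring

theorem prod_sub_eq_pow_sub_sum_symPoly {n : ℕ} (lam : Fin n → ℂ) (x : ℂ) :
    ∏ i, (x - lam i) = x ^ n - ∑ j : Fin n, (-1) ^ (j : ℕ) * symPoly n lam j * x ^ (n - 1 - j) := by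
  have h := congrArg (Polynomial.eval x) (Multiset.prod_X_sub_X_eq_sum_esymm (univ.val.map lam))
  simp only [Polynomial.eval_multiset_prod, Multiset.map_map, Function.comp_def,
    Polynomial.eval_sub, Polynomial.eval_X, Polynomial.eval_C, Polynomial.eval_finsetSum,
    Polynomial.eval_mul, Polynomial.eval_pow, Polynomial.eval_neg, Polynomial.eval_one,
    Multiset.card_map, card_val, card_univ, Fintype.card_fin] at h
  rw [prod_eq_multiset_prod, h, sum_range_succ', ← Fin.sum_univ_eq_sum_range]
  have h0 : (univ.val.map lam).esymm 0 = 1 := by simp [Multiset.esymm]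
  rw [pow_zero, Nat.sub_zero, h0, one_mul, one_mul, add_comm, sub_eq_add_neg, ← sum_neg_distrib]
  refine congrArg _ (sum_congr rfl fun j _ => ?_)
  rw [symPoly_apply, show n - (j + 1) = n - 1 - j by omega]
  ring

theorem symPoly_mem_hplane {n : ℕ} (lam : Fin n → ℂ) (i : Fin n) :
    symPoly n lam ∈ hplane n (lam i) := by
  set rest := (univ.erase i).val.map lam
  have hcons : univ.val.map lam = lam i ::ₘ rest := by
    rw [← Multiset.map_cons, ← insert_val_of_notMem (notMem_erase i univ),
      insert_erase (mem_univ i)]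
  refine ⟨fun k => rest.esymm k, by simp [Multiset.esymm], ?_, fun j => ?_⟩
  · refine Multiset.sum_eq_zero fun p hp => ?_
    rw [Multiset.powersetCard_eq_empty] at hp
    · simp at hp
    · simpa [rest] using i.pos
  · rw [symPoly_apply, hcons, Multiset.esymm_cons_succ]
    rfl

theorem symPoly_mem_hplane_iff {n : ℕ} (lam : Fin n → ℂ) (x : ℂ) :
    symPoly n lam ∈ hplane n x ↔ ∃ i, lam i = x := by
  refine ⟨fun h => ?_, fun ⟨i, hi⟩ => hi ▸ symPoly_mem_hplane lam i⟩
  have hroot : ∏ i, (x - lam i) = 0 := by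
    rw [prod_sub_eq_pow_sub_sum_symPoly, ← pow_eq_sum_of_mem_hplane h, sub_self]
  obtain ⟨i, -, hi⟩ := prod_eq_zero_iff.1 hroot
  exact ⟨i, (sub_eq_zero.1 hi).symm⟩

/-- If `w = π_n(μ)` with `μ 0 ∉ D`, the affine hyperplane `H(w, μ 0)` passes
through `w` and is disjoint from `S_n(D)`. -/
theorem hplane_mem_and_disjoint (n : ℕ) (hn : 2 ≤ n) (D : Set ℂ)
    (μ : Fin n → ℂ) (hμ : μ ⟨0, by omega⟩ ∉ D) :
    symPoly n μ ∈ hplane n (μ ⟨0, by omega⟩) ∧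
    hplane n (μ ⟨0, by omega⟩) ∩ symProd n D = ∅ := by
  refine ⟨symPoly_mem_hplane μ _, Set.eq_empty_of_forall_notMem ?_⟩
  rintro _ ⟨hv, lam, hlam, rfl⟩
  obtain ⟨i, hi⟩ := (symPoly_mem_hplane_iff lam _).1 hv
  exact hμ (hi ▸ hlam i)
end

section
/- If S_n(D) is hyperconvex for a domain D ⊆ ℂ and n ≥ 2, then D is hyperconvex: for fixed λ_1,…,λ_{n−1} ∈ D and a negative plurisubharmonic exhaustion v of S_n(D), the function u(λ) := v(π_n(λ_1,…,λ_{n−1},λ)) is a negative subharmonic exhaustion of D. -/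
open scoped Real

/-- A function `u` is subharmonic on a set `s ⊆ ℂ` if it is upper
semicontinuous on `s` and satisfies the sub-mean value inequality on every
closed disc contained in `s`. -/
def SubharmonicOn (u : ℂ → ℝ) (s : Set ℂ) : Prop :=
  UpperSemicontinuousOn u s ∧
  ∀ c ∈ s, ∀ r : ℝ, 0 < r → Metric.closedBall c r ⊆ s →
    u c ≤ (1 / (2 * π)) *
      ∫ θ in (0:ℝ)..(2 * π), u (c + r * Complex.exp (θ * Complex.I))

/-- A function `u` is plurisubharmonic on a set `s ⊆ ℂ^n` if it is upper
semicontinuous on `s` and its restriction to every complex line satisfies the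
sub-mean value inequality on closed discs whose image lies in `s`. -/
def PlurisubharmonicOn {n : ℕ} (u : (Fin n → ℂ) → ℝ) (s : Set (Fin n → ℂ)) : Prop :=
  UpperSemicontinuousOn u s ∧
  ∀ a b : Fin n → ℂ, ∀ c : ℂ, ∀ r : ℝ, 0 < r →
    (∀ z ∈ Metric.closedBall c r, a + z • b ∈ s) →
    u (a + c • b) ≤ (1 / (2 * π)) *
      ∫ θ in (0:ℝ)..(2 * π), u (a + (c + r * Complex.exp (θ * Complex.I)) • b)

/-- `u` is a negative exhaustion function of `s`: it is negative on `s` and its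
sublevel sets are relatively compact in `s`. -/
def IsNegExhaustion {α : Type*} [TopologicalSpace α] (u : α → ℝ) (s : Set α) : Prop :=
  (∀ z ∈ s, u z < 0) ∧
  ∀ c : ℝ, c < 0 → IsCompact (closure {z ∈ s | u z < c}) ∧
    closure {z ∈ s | u z < c} ⊆ s

open Polynomial in
lemma symPoly_multiset_eq {n : ℕ} {μ ν : Fin n → ℂ}
    (h : symPoly n μ = symPoly n ν) :
    Multiset.map μ Finset.univ.val = Multiset.map ν Finset.univ.val := by
  set s := Multiset.map μ Finset.univ.val with hs
  set t := Multiset.map ν Finset.univ.val with ht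
  have hcs : Multiset.card s = n := by simp [hs]
  have hct : Multiset.card t = n := by simp [ht]
  have hesymm : ∀ k, s.esymm k = t.esymm k := by
    intro k
    rcases Nat.eq_zero_or_pos k with hk | hk
    · simp [hk, Multiset.esymm]
    rcases lt_or_ge (k - 1) n with hkn | hkn
    · have := congrFun h ⟨k - 1, hkn⟩
      simp only [symPoly] at this
      rw [hs, ht, Finset.esymm_map_val, Finset.esymm_map_val]
      have hk1 : k - 1 + 1 = k := Nat.succ_pred_eq_of_pos hk
      rw [← hk1]
      exact this
    · rw [Multiset.esymm, Multiset.esymm,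
        Multiset.powersetCard_eq_empty _ (by omega : Multiset.card s < k),
        Multiset.powersetCard_eq_empty _ (by omega : Multiset.card t < k)]
  have hP : (s.map fun a => X - C a).prod = (t.map fun a => X - C a).prod := by
    ext k
    rcases le_or_gt k n with hk | hk
    · rw [Multiset.prod_X_sub_C_coeff s (by omega), Multiset.prod_X_sub_C_coeff t (by omega),
        hcs, hct, hesymm]
    · rw [Polynomial.coeff_eq_zero_of_natDegree_lt, Polynomial.coeff_eq_zero_of_natDegree_lt]
      · rw [Polynomial.natDegree_multiset_prod_X_sub_C_eq_card, hct]; exact hk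
      · rw [Polynomial.natDegree_multiset_prod_X_sub_C_eq_card, hcs]; exact hk
  have := congrArg Polynomial.roots hP
  rwa [Polynomial.roots_multiset_prod_X_sub_C, Polynomial.roots_multiset_prod_X_sub_C] at this

lemma symPoly_aux (n : ℕ) (hn : 2 ≤ n) (lam : Fin (n - 1) → ℂ) (k : ℕ) :
    ∃ A B : ℂ, ∀ z : ℂ,
      ∑ t ∈ Finset.powersetCard k (Finset.univ : Finset (Fin n)), ∏ i ∈ t,
        (if h : (i : ℕ) < n - 1 then lam ⟨i, h⟩ else z) = A + z * B := by
  set L : Fin n := ⟨n - 1, by omega⟩ with hL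
  set F : ℂ → Fin n → ℂ := fun z i => if h : (i : ℕ) < n - 1 then lam ⟨i, h⟩ else z with hF
  have hFne : ∀ z z' : ℂ, ∀ i : Fin n, i ≠ L → F z i = F z' i := by
    intro z z' i hi
    have : (i : ℕ) < n - 1 := by
      have := i.isLt
      have : (i : ℕ) ≠ n - 1 := fun hc => hi (Fin.ext hc)
      omega
    simp [hF, this]
  have hFL : ∀ z : ℂ, F z L = z := by
    intro z; simp [hF, hL]
  refine ⟨∑ t ∈ (Finset.powersetCard k (Finset.univ : Finset (Fin n))).filter (fun t => L ∉ t),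
    ∏ i ∈ t, F 0 i,
    ∑ t ∈ (Finset.powersetCard k (Finset.univ : Finset (Fin n))).filter (fun t => L ∈ t),
    ∏ i ∈ t.erase L, F 0 i, ?_⟩
  intro z
  rw [← Finset.sum_filter_add_sum_filter_not (Finset.powersetCard k Finset.univ) (fun t => L ∈ t)]
  rw [add_comm, Finset.mul_sum]
  congr 1
  · exact Finset.sum_congr rfl fun t ht => Finset.prod_congr rfl fun i hi =>
      hFne z 0 i (fun hc => (Finset.mem_filter.mp ht).2 (hc ▸ hi))
  · refine Finset.sum_congr rfl fun t ht => ?_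
    have hLt : L ∈ t := (Finset.mem_filter.mp ht).2
    rw [← Finset.mul_prod_erase t (F z) hLt, hFL]
    congr 1
    exact Finset.prod_congr rfl fun i hi => hFne z 0 i (Finset.ne_of_mem_erase hi)

lemma symPoly_coord_zero (n : ℕ) (hn : 2 ≤ n) (lam : Fin (n - 1) → ℂ) :
    ∃ S : ℂ, ∀ z : ℂ,
      symPoly n (fun i : Fin n => if h : (i : ℕ) < n - 1 then lam ⟨i, h⟩ else z)
        ⟨0, by omega⟩ = z + S := by
  set L : Fin n := ⟨n - 1, by omega⟩ with hL
  set F : ℂ → Fin n → ℂ := fun z i => if h : (i : ℕ) < n - 1 then lam ⟨i, h⟩ else z with hF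
  refine ⟨∑ i ∈ Finset.univ.erase L, F 0 i, fun z => ?_⟩
  show ∑ t ∈ Finset.powersetCard (0 + 1) (Finset.univ : Finset (Fin n)), ∏ i ∈ t, F z i = _
  rw [zero_add, Finset.powersetCard_one, Finset.sum_map]
  simp only [Function.Embedding.coeFn_mk, Finset.prod_singleton]
  rw [← Finset.add_sum_erase _ (F z) (Finset.mem_univ L)]
  have hFL : F z L = z := by simp [hF, hL]
  rw [hFL]
  congr 1
  refine Finset.sum_congr rfl fun i hi => ?_
  have hiL : i ≠ L := Finset.ne_of_mem_erase hi
  have : (i : ℕ) < n - 1 := by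
    have := i.isLt
    have : (i : ℕ) ≠ n - 1 := fun hc => hiL (Fin.ext hc)
    omega
  simp [hF, this]

/-- If `S_n(D)` is hyperconvex (with negative plurisubharmonic exhaustion `v`)
for a domain `D ⊆ ℂ` and `n ≥ 2`, then for fixed `λ_1, …, λ_{n-1} ∈ D` the
function `u(λ) = v(π_n(λ_1,…,λ_{n-1},λ))` is a negative subharmonic exhaustion
of `D`; in particular `D` is hyperconvex. -/
theorem hyperconvex_of_symProd (n : ℕ) (hn : 2 ≤ n) (D : Set ℂ)
    (hDopen : IsOpen D) (hDconn : IsConnected D)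
    (v : (Fin n → ℂ) → ℝ) (hpsh : PlurisubharmonicOn v (symProd n D))
    (hex : IsNegExhaustion v (symProd n D))
    (lam : Fin (n - 1) → ℂ) (hlam : ∀ i, lam i ∈ D) :
    SubharmonicOn
      (fun z => v (symPoly n (fun i : Fin n =>
        if h : (i : ℕ) < n - 1 then lam ⟨i, h⟩ else z))) D ∧
    IsNegExhaustion
      (fun z => v (symPoly n (fun i : Fin n =>
        if h : (i : ℕ) < n - 1 then lam ⟨i, h⟩ else z))) D := by
  have hn1 : n - 1 < n := by omega
  set a : Fin n → ℂ := symPoly n (fun i : Fin n =>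
    if h : (i : ℕ) < n - 1 then lam ⟨i, h⟩ else (0 : ℂ)) with ha
  set b : Fin n → ℂ := (symPoly n (fun i : Fin n =>
    if h : (i : ℕ) < n - 1 then lam ⟨i, h⟩ else (1 : ℂ))) - (symPoly n (fun i : Fin n =>
    if h : (i : ℕ) < n - 1 then lam ⟨i, h⟩ else (0 : ℂ))) with hb
  have hkey : ∀ z : ℂ, symPoly n (fun i : Fin n =>
      if h : (i : ℕ) < n - 1 then lam ⟨i, h⟩ else z) = a + z • b := by
    intro z
    funext j
    obtain ⟨A, B, hAB⟩ := symPoly_aux n hn lam ((j : ℕ) + 1)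
    have e : ∀ w : ℂ, symPoly n (fun i : Fin n =>
        if h : (i : ℕ) < n - 1 then lam ⟨i, h⟩ else w) j = A + w * B := fun w => hAB w
    have haj : a j = A := by rw [ha]; rw [e 0]; ring
    have hbj : b j = B := by
      rw [hb]; simp only [Pi.sub_apply]; rw [e 1, e 0]; ring
    simp only [Pi.add_apply, Pi.smul_apply, smul_eq_mul, haj, hbj, e z]
  -- membership
  have hmem : ∀ z ∈ D, a + z • b ∈ symProd n D := by
    intro z hz
    refine ⟨fun i : Fin n => if h : (i : ℕ) < n - 1 then lam ⟨i, h⟩ else z, fun i => ?_,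
      hkey z⟩
    by_cases h : (i : ℕ) < n - 1
    · simpa [h] using hlam ⟨i, h⟩
    · simpa [h] using hz
  have hback : ∀ z : ℂ, a + z • b ∈ symProd n D → z ∈ D := by
    intro z hz
    obtain ⟨μ, hμ, hμeq⟩ := hz
    rw [← hkey z] at hμeq
    have hms := symPoly_multiset_eq hμeq
    have hzmem : z ∈ Multiset.map (fun i : Fin n =>
        if h : (i : ℕ) < n - 1 then lam ⟨i, h⟩ else z) Finset.univ.val := by
      refine Multiset.mem_map.mpr ⟨⟨n - 1, hn1⟩, ?_, ?_⟩
      · simp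
      · simp
    rw [← hms] at hzmem
    obtain ⟨i, _, hi⟩ := Multiset.mem_map.mp hzmem
    exact hi ▸ hμ i
  have hGcont : Continuous fun z : ℂ => a + z • b :=
    continuous_const.add (continuous_id.smul continuous_const)
  simp only [hkey]
  refine ⟨⟨?_, ?_⟩, ?_, ?_⟩
  · -- upper semicontinuity
    intro x hx y hy
    have h1 := hpsh.1 (a + x • b) (hmem x hx) y hy
    have ht : Filter.Tendsto (fun z : ℂ => a + z • b) (nhdsWithin x D)
        (nhdsWithin (a + x • b) (symProd n D)) :=
      hGcont.continuousWithinAt.tendsto_nhdsWithin (fun z hz => hmem z hz)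
    exact ht.eventually h1
  · -- sub-mean value inequality
    intro c hc r hr hball
    exact hpsh.2 a b c r hr (fun z hz => hmem z (hball hz))
  · -- negativity
    intro z hz
    exact hex.1 _ (hmem z hz)
  · -- exhaustion
    intro c hc
    obtain ⟨hKcomp, hKsub⟩ := hex.2 c hc
    set K := closure {w ∈ symProd n D | v w < c} with hK
    have hsub : {z ∈ D | v (a + z • b) < c} ⊆ (fun z : ℂ => a + z • b) ⁻¹' K :=
      fun z hz => subset_closure ⟨hmem z hz.1, hz.2⟩
    have hclosedpre : IsClosed ((fun z : ℂ => a + z • b) ⁻¹' K) :=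
      isClosed_closure.preimage hGcont
    have hclos : closure {z ∈ D | v (a + z • b) < c} ⊆ (fun z : ℂ => a + z • b) ⁻¹' K :=
      closure_minimal hsub hclosedpre
    constructor
    · -- compactness
      refine Metric.isCompact_of_isClosed_isBounded isClosed_closure ?_
      obtain ⟨M, hM⟩ := hKcomp.isBounded.exists_norm_le
      obtain ⟨S, hS⟩ := symPoly_coord_zero n hn lam
      have hb0 : b ⟨0, by omega⟩ = 1 := by
        rw [hb]; simp only [Pi.sub_apply]; rw [hS 1, hS 0]; ring
      have ha0 : ∀ z : ℂ, (a + z • b) ⟨0, by omega⟩ = a ⟨0, by omega⟩ + z := by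
        intro z; simp [hb0]
      refine (Bornology.IsBounded.subset ?_ hclos)
      have : (fun z : ℂ => a + z • b) ⁻¹' K ⊆
          Metric.closedBall 0 (M + ‖a ⟨0, by omega⟩‖) := by
        intro z hz
        have h1 : ‖a + z • b‖ ≤ M := hM _ hz
        have h2 : ‖(a + z • b) ⟨0, by omega⟩‖ ≤ ‖a + z • b‖ :=
          norm_le_pi_norm (a + z • b) _
        rw [ha0 z] at h2
        have h3 : ‖z‖ ≤ ‖a ⟨0, by omega⟩ + z‖ + ‖a ⟨0, by omega⟩‖ := by
          simpa [add_sub_cancel_left] using norm_sub_le (a ⟨0, by omega⟩ + z) (a ⟨0, by omega⟩)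
        simp only [Metric.mem_closedBall, dist_zero_right]
        linarith
      exact Metric.isBounded_closedBall.subset this
    · -- contained in D
      intro x hx
      exact hback x (hKsub (hclos hx))
end
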